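/- Let (σ_m)_{m∈ℕ} be a sequence of nonnegative reals with σ_1 = sup_m σ_m > 0, and for L ∈ ℕ and k ∈ ℕ^L set σ_{L,k} := ∏_{ℓ=1}^L σ_{k_ℓ}. Then for all U ∈ ℕ_0 and s ∈ ℕ: ∑_{k ∈ ℕ^s, k_1 ≤ ⋯ ≤ k_s} σ_{s,k} ≤ σ_1^s · s^{2U} · (1 + 2U + ∑_{L=1}^s σ_1^{-L} ∑_{j ∈ ℕ^L, 2(U+1) ≤ j_1 ≤ ⋯ ≤ j_L} σ_{L,j}), with equality for U = 0. -/

import Mathlib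

/-!
Split a nondecreasing multi-index at the threshold `T = 2(U+1)`: its entries below `T` form an
initial block, so the sum factors as `∑_{m+L=s} A_m B_L`, where `A_m` sums over nondecreasing
blocks with entries in `[1, T)` and `B_L` over those with entries `≥ T` (and `B_0 = 1`).
A low block of length `m` is determined by the counts `#{j | k_j < c}`, `2 ≤ c < T`, so there
are at most `(m+1)^(2U)` of them, and at most `(2U+1) s^(2U)` for `m = s` (choose the first
entry, then count the rest); each contributes at most `σ_1^m`. For `U = 0` the only low block is
`(1, …, 1)`, whence equality.
-/

open scoped ENNReal
open Finset

namespace Fin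

theorem mem_iff_lt_card_of_isLowerSet {n : ℕ} {S : Finset (Fin n)}
    (hS : IsLowerSet (S : Set (Fin n))) (i : Fin n) : i ∈ S ↔ (i : ℕ) < #S := by
  rcases hS.eq_univ_or_Iio with h | ⟨a, h⟩
  · rw [Finset.coe_eq_univ] at h
    simp [h]
  · rw [← Finset.coe_Iio, Finset.coe_inj] at h
    rw [h, Finset.mem_Iio, card_Iio, lt_def]

theorem monotone_append_iff {α : Type*} [Preorder α] {m n : ℕ} {a : Fin m → α} {b : Fin n → α} :
    Monotone (append a b) ↔ Monotone a ∧ Monotone b ∧ ∀ i j, a i ≤ b j := by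
  refine ⟨fun h => ⟨?_, ?_, ?_⟩, fun ⟨ha, hb, hab⟩ => ?_⟩
  · exact fun i j hij => by simpa using h ((strictMono_castAdd n).monotone hij)
  · exact fun i j hij => by simpa using h ((strictMono_natAdd m).monotone hij)
  · intro i j
    simpa using h (show castAdd n i ≤ natAdd m j from Fin.le_def.2 (by simp; omega))
  · intro i j hij
    cases i using Fin.addCases with
    | left i =>
      cases j using Fin.addCases with
      | left j => simpa using ha ((strictMono_castAdd n).le_iff_le.1 hij)
      | right j => simpa using hab i j
    | right i =>
      cases j using Fin.addCases with
      | left j => exact absurd hij (by simp [Fin.le_def]; omega)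
      | right j => simpa using hb ((strictMono_natAdd m).le_iff_le.1 hij)

end Fin

theorem Monotone.lt_iff_lt_card_filter {α : Type*} [LinearOrder α] {n : ℕ} {k : Fin n → α}
    (hk : Monotone k) (T : α) (i : Fin n) : k i < T ↔ (i : ℕ) < #{j | k j < T} := by
  rw [← Fin.mem_iff_lt_card_of_isLowerSet, mem_filter]
  · simp
  · intro i j hij hj
    simp only [coe_filter, mem_univ, true_and, Set.mem_ofPred_eq] at *
    exact (hk hij).trans_lt hj

theorem Finset.Nat.sum_antidiagonal_eq_add_sum_Icc {M : Type*} [AddCommMonoid M] (f : ℕ → ℕ → M)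
    (s : ℕ) : ∑ x ∈ antidiagonal s, f x.1 x.2 = f s 0 + ∑ L ∈ Icc 1 s, f (s - L) L := by
  rw [← Finset.Nat.sum_antidiagonal_swap]
  simp only [Prod.fst_swap, Prod.snd_swap]
  rw [Finset.Nat.sum_antidiagonal_eq_sum_range_succ (fun L m => f m L), range_eq_Ico,
    sum_eq_sum_Ico_succ_bot (Nat.succ_pos s), zero_add, Nat.succ_eq_add_one,
    Ico_add_one_right_eq_Icc, Nat.sub_zero]

section MonotoneTuple

variable {α : Type*} [LinearOrder α]

abbrev MonotoneTuple (n : ℕ) (p : α → Prop) : Type _ :=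
  {k : Fin n → α // Monotone k ∧ ∀ i, p (k i)}

noncomputable def monotoneTupleSum (σ : α → ℝ≥0∞) (n : ℕ) (p : α → Prop) : ℝ≥0∞ :=
  ∑' k : MonotoneTuple n p, ∏ i, σ (k.1 i)

theorem monotone_append_and_card_filter_lt_iff {p : α → Prop} {T : α} {m n : ℕ} (a : Fin m → α)
    (b : Fin n → α) :
    ((Monotone (Fin.append a b) ∧ ∀ i, p (Fin.append a b i)) ∧ #{i | Fin.append a b i < T} = m) ↔
      (Monotone a ∧ ∀ i, p (a i) ∧ a i < T) ∧ (Monotone b ∧ ∀ i, p (b i) ∧ T ≤ b i) := by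
  constructor
  · rintro ⟨⟨hk, hp⟩, hm⟩
    obtain ⟨ha, hb, -⟩ := Fin.monotone_append_iff.1 hk
    have hlt := hk.lt_iff_lt_card_filter T
    rw [hm] at hlt
    refine ⟨⟨ha, fun i => ⟨by simpa using hp (Fin.castAdd n i), ?_⟩⟩,
      ⟨hb, fun i => ⟨by simpa using hp (Fin.natAdd m i), ?_⟩⟩⟩
    · simpa using (hlt (Fin.castAdd n i)).2 (by simp)
    · simpa using mt (hlt (Fin.natAdd m i)).1 (by simp)
  · rintro ⟨⟨ha, hpa⟩, ⟨hb, hpb⟩⟩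
    refine ⟨⟨Fin.monotone_append_iff.2 ⟨ha, hb, fun i j => ((hpa i).2.trans_le (hpb j).2).le⟩,
      fun i => ?_⟩, ?_⟩
    · cases i using Fin.addCases <;> simp [hpa, hpb]
    · rw [card_filter, Fin.sum_univ_add]
      simp [hpa, (hpb _).2.not_gt]

def monotoneTupleAppendEquiv (p : α → Prop) (T : α) (m n : ℕ) :
    MonotoneTuple m (fun x => p x ∧ x < T) × MonotoneTuple n (fun x => p x ∧ T ≤ x) ≃
      {k : MonotoneTuple (m + n) p // #{i | k.1 i < T} = m} :=
  Equiv.subtypeProdEquivProd.symm.trans <|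
    ((Fin.appendEquiv m n).subtypeEquiv fun ab =>
      (monotone_append_and_card_filter_lt_iff ab.1 ab.2).symm).trans
    (Equiv.subtypeSubtypeEquivSubtypeInter (fun k : Fin (m + n) → α => Monotone k ∧ ∀ i, p (k i))
      fun k => #{i | k i < T} = m).symm

theorem tsum_card_filter_lt_eq_mul (σ : α → ℝ≥0∞) (p : α → Prop) (T : α) (m n : ℕ) :
    ∑' k : {k : MonotoneTuple (m + n) p // #{i | k.1 i < T} = m}, ∏ i, σ (k.1.1 i) =
      monotoneTupleSum σ m (fun x => p x ∧ x < T) *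
        monotoneTupleSum σ n (fun x => p x ∧ T ≤ x) := by
  have happend : ∀ ab, ((monotoneTupleAppendEquiv p T m n ab).1.1 : Fin (m + n) → α) =
      Fin.append ab.1.1 ab.2.1 := fun _ => rfl
  rw [← (monotoneTupleAppendEquiv p T m n).tsum_eq, monotoneTupleSum, monotoneTupleSum]
  simp only [happend, Fin.prod_univ_add, Fin.append_left, Fin.append_right]
  rw [ENNReal.tsum_prod', ← ENNReal.tsum_mul_right]
  simp only [ENNReal.tsum_mul_left]

theorem monotoneTupleSum_eq_sum_antidiagonal (σ : α → ℝ≥0∞) (p : α → Prop) (T : α) (s : ℕ) :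
    monotoneTupleSum σ s p = ∑ x ∈ antidiagonal s,
      monotoneTupleSum σ x.1 (fun y => p y ∧ y < T) *
        monotoneTupleSum σ x.2 (fun y => p y ∧ T ≤ y) := by
  rw [Finset.Nat.sum_antidiagonal_eq_sum_range_succ
    (fun m n => monotoneTupleSum σ m _ * monotoneTupleSum σ n _)]
  have hfiber : ∀ m ∉ range (s + 1),
      ∑' k : {k : MonotoneTuple s p // #{i | k.1 i < T} = m}, ∏ i, σ (k.1.1 i) = 0 := by
    intro m hm
    have : IsEmpty {k : MonotoneTuple s p // #{i | k.1 i < T} = m} :=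
      ⟨fun k => hm (mem_range_succ_iff.2 (k.2 ▸ (card_filter_le _ _).trans_eq (card_fin s)))⟩
    exact tsum_empty
  calc monotoneTupleSum σ s p
      = ∑' m, ∑' k : {k : MonotoneTuple s p // #{i | k.1 i < T} = m}, ∏ i, σ (k.1.1 i) := by
        rw [monotoneTupleSum, ← (Equiv.sigmaFiberEquiv fun k : MonotoneTuple s p =>
          #{i | k.1 i < T}).tsum_eq, ENNReal.tsum_sigma']
        rfl
    _ = ∑ m ∈ range (s + 1),
          ∑' k : {k : MonotoneTuple s p // #{i | k.1 i < T} = m}, ∏ i, σ (k.1.1 i) :=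
        tsum_eq_sum hfiber
    _ = _ := by
      refine sum_congr rfl fun m hm => ?_
      obtain ⟨n, rfl⟩ := Nat.exists_eq_add_of_le (mem_range_succ_iff.1 hm)
      rw [tsum_card_filter_lt_eq_mul, Nat.add_sub_cancel_left]

theorem monotoneTupleSum_zero (σ : α → ℝ≥0∞) (p : α → Prop) : monotoneTupleSum σ 0 p = 1 := by
  rw [monotoneTupleSum, tsum_eq_single ⟨finZeroElim, fun i => i.elim0, fun i => i.elim0⟩
    fun k hk => absurd (Subtype.ext (funext fun i => i.elim0)) hk]
  simp

theorem monotoneTupleSum_le (σ : α → ℝ≥0∞) {p : α → Prop} {M : ℝ≥0∞} (h : ∀ x, p x → σ x ≤ M)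
    (n : ℕ) : monotoneTupleSum σ n p ≤ ENat.card (MonotoneTuple n p) * M ^ n := by
  rw [← ENNReal.tsum_const]
  exact ENNReal.tsum_le_tsum fun k => (prod_le_prod' fun i _ => h _ (k.2.2 i)).trans_eq (by simp)

end MonotoneTuple

theorem enatCard_monotoneTuple_Ico_le (W m : ℕ) :
    ENat.card (MonotoneTuple m fun x : ℕ => 1 ≤ x ∧ x < W + 2) ≤ (m + 1) ^ W := by
  let counts (k : MonotoneTuple m fun x : ℕ => 1 ≤ x ∧ x < W + 2) (v : Fin W) : Fin (m + 1) :=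
    ⟨#{j | k.1 j < v + 2}, Nat.lt_succ_of_le ((card_filter_le _ _).trans_eq (card_fin m))⟩
  have hcounts : Function.Injective counts := by
    intro k k' h
    refine Subtype.ext (funext fun i => eq_of_forall_gt_iff fun c => ?_)
    have hk := (k.2.2 i).1
    have hk' := (k'.2.2 i).1
    rcases lt_or_ge c 2 with hc | hc
    · omega
    rcases lt_or_ge c (W + 2) with hcW | hcW
    · obtain ⟨v, rfl⟩ := Nat.exists_eq_add_of_le' hc
      rw [k.2.1.lt_iff_lt_card_filter, k'.2.1.lt_iff_lt_card_filter]
      exact iff_of_eq (congrArg (fun f => (i : ℕ) < (f ⟨v, by omega⟩ : ℕ)) h)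
    · have := (k.2.2 i).2
      have := (k'.2.2 i).2
      omega
  calc ENat.card _ ≤ ENat.card (Fin W → Fin (m + 1)) := ENat.card_le_card_of_injective hcounts
    _ = (m + 1) ^ W := by simp [ENat.card_eq_coe_fintype_card]

theorem enatCard_monotoneTuple_Ico_succ_le (W m : ℕ) :
    ENat.card (MonotoneTuple (m + 1) fun x : ℕ => 1 ≤ x ∧ x < W + 2) ≤
      (W + 1) * ENat.card (MonotoneTuple m fun x : ℕ => 1 ≤ x ∧ x < W + 2) := by
  let headTail (k : MonotoneTuple (m + 1) fun x : ℕ => 1 ≤ x ∧ x < W + 2) :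
      Fin (W + 1) × MonotoneTuple m fun x : ℕ => 1 ≤ x ∧ x < W + 2 :=
    (⟨k.1 0 - 1, by have := k.2.2 0; omega⟩,
      ⟨Fin.tail k.1, k.2.1.comp (Fin.strictMono_succ).monotone, fun i => k.2.2 _⟩)
  have hheadTail : Function.Injective headTail := by
    intro k k' h
    simp only [headTail, Prod.mk.injEq, Fin.mk.injEq, Subtype.mk.injEq] at h
    have hk := (k.2.2 0).1
    have hk' := (k'.2.2 0).1
    rw [Subtype.ext_iff, ← Fin.cons_self_tail k.1, ← Fin.cons_self_tail k'.1, h.2]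
    congr 1
    omega
  calc ENat.card _ ≤ ENat.card (Fin (W + 1) × MonotoneTuple m fun x : ℕ => 1 ≤ x ∧ x < W + 2) :=
        ENat.card_le_card_of_injective hheadTail
    _ = _ := by simp [ENat.card_prod, ENat.card_eq_coe_fintype_card]

theorem monotoneTupleSum_Ico_one_two (σ : ℕ → ℝ≥0∞) (m : ℕ) :
    monotoneTupleSum σ m (fun x => 1 ≤ x ∧ x < 2) = σ 1 ^ m := by
  rw [monotoneTupleSum, tsum_eq_single ⟨fun _ => 1, monotone_const, fun _ => ⟨le_rfl, one_lt_two⟩⟩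
    fun k hk => absurd (Subtype.ext (funext fun i => show k.1 i = 1 by grind)) hk]
  simp

theorem monotoneTupleSum_Ico_le (σ : ℕ → ℝ≥0∞) {W : ℕ} {M : ℝ≥0∞}
    (h : ∀ x, 1 ≤ x ∧ x < W + 2 → σ x ≤ M) (m : ℕ) :
    monotoneTupleSum σ m (fun x => 1 ≤ x ∧ x < W + 2) ≤ (m + 1) ^ W * M ^ m := by
  refine (monotoneTupleSum_le σ h m).trans (mul_le_mul_left ?_ _)
  exact_mod_cast ENat.toENNReal_le.2 (enatCard_monotoneTuple_Ico_le W m)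

theorem monotoneTupleSum_Ico_succ_le (σ : ℕ → ℝ≥0∞) {W : ℕ} {M : ℝ≥0∞}
    (h : ∀ x, 1 ≤ x ∧ x < W + 2 → σ x ≤ M) (m : ℕ) :
    monotoneTupleSum σ (m + 1) (fun x => 1 ≤ x ∧ x < W + 2) ≤
      (W + 1) * (m + 1) ^ W * M ^ (m + 1) := by
  refine (monotoneTupleSum_le σ h (m + 1)).trans (mul_le_mul_left ?_ _)
  have := (enatCard_monotoneTuple_Ico_succ_le W m).trans
    (mul_le_mul_right (enatCard_monotoneTuple_Ico_le W m) _)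
  exact_mod_cast ENat.toENNReal_le.2 this

theorem ENNReal.pow_mul_inv_pow_of_le {x : ℝ≥0∞} (h0 : x ≠ 0) (htop : x ≠ ⊤) {m n : ℕ}
    (h : n ≤ m) : x ^ m * x⁻¹ ^ n = x ^ (m - n) := by
  rw [← Nat.sub_add_cancel h, pow_add, mul_assoc, ← mul_pow, ENNReal.mul_inv_cancel h0 htop,
    one_pow, mul_one, Nat.add_sub_cancel]

/-- Technical bound on sums over non-decreasing multi-indices (read in the
extended nonnegative reals), with equality for `U = 0`. -/
theorem nondecreasing_multiindex_sum_bound (σ : ℕ → ℝ≥0∞)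
    (hfin : ∀ m, σ m ≠ ⊤) (hsup : ∀ m, 1 ≤ m → σ m ≤ σ 1) (hpos : 0 < σ 1)
    (U s : ℕ) (hs : 1 ≤ s) :
    (∑' k : {k : Fin s → ℕ // Monotone k ∧ ∀ i, 1 ≤ k i}, ∏ i, σ (k.1 i))
      ≤ σ 1 ^ s * (s : ℝ≥0∞) ^ (2 * U) *
          ((1 : ℝ≥0∞) + 2 * U +
            ∑ L ∈ Finset.Icc 1 s, (σ 1)⁻¹ ^ L *
              ∑' j : {j : Fin L → ℕ // Monotone j ∧ ∀ i, 2 * (U + 1) ≤ j i},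
                ∏ i, σ (j.1 i)) ∧
    (U = 0 →
      (∑' k : {k : Fin s → ℕ // Monotone k ∧ ∀ i, 1 ≤ k i}, ∏ i, σ (k.1 i))
        = σ 1 ^ s * (s : ℝ≥0∞) ^ (2 * U) *
            ((1 : ℝ≥0∞) + 2 * U +
              ∑ L ∈ Finset.Icc 1 s, (σ 1)⁻¹ ^ L *
                ∑' j : {j : Fin L → ℕ // Monotone j ∧ ∀ i, 2 * (U + 1) ≤ j i},
                  ∏ i, σ (j.1 i))) := by
  rw [show 2 * (U + 1) = 2 * U + 2 by ring]
  set Lo : ℕ → ℝ≥0∞ := fun m => monotoneTupleSum σ m fun x => 1 ≤ x ∧ x < 2 * U + 2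
  set Hi : ℕ → ℝ≥0∞ := fun L => monotoneTupleSum σ L fun x => 2 * U + 2 ≤ x
  have hsplit : monotoneTupleSum σ s (1 ≤ ·) = Lo s + ∑ L ∈ Icc 1 s, Lo (s - L) * Hi L := by
    have hHi : (fun y => 1 ≤ y ∧ 2 * U + 2 ≤ y) = (2 * U + 2 ≤ ·) :=
      funext fun y => propext (and_iff_right_of_imp (by omega))
    rw [monotoneTupleSum_eq_sum_antidiagonal σ _ (2 * U + 2), hHi]
    exact (Finset.Nat.sum_antidiagonal_eq_add_sum_Icc (fun m L => Lo m * Hi L) s).trans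
      (by simp only [Hi, monotoneTupleSum_zero, mul_one])
  have hrhs : σ 1 ^ s * (s : ℝ≥0∞) ^ (2 * U) * (1 + 2 * U + ∑ L ∈ Icc 1 s, (σ 1)⁻¹ ^ L * Hi L) =
      (1 + 2 * U) * s ^ (2 * U) * σ 1 ^ s + ∑ L ∈ Icc 1 s, s ^ (2 * U) * σ 1 ^ (s - L) * Hi L := by
    rw [mul_add, mul_sum]
    congr 1
    · ring
    · refine sum_congr rfl fun L hL => ?_
      rw [← ENNReal.pow_mul_inv_pow_of_le hpos.ne' (hfin 1) (mem_Icc.1 hL).2]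
      ring
  have hσ : ∀ x, 1 ≤ x ∧ x < 2 * U + 2 → σ x ≤ σ 1 := fun x hx => hsup x hx.1
  refine ⟨(hsplit.trans_le (add_le_add ?_ (sum_le_sum fun L hL => ?_))).trans_eq hrhs.symm,
    fun hU => hsplit.trans (Eq.trans ?_ hrhs.symm)⟩
  · obtain ⟨m, rfl⟩ := Nat.exists_eq_add_of_le' hs
    exact (monotoneTupleSum_Ico_succ_le σ hσ m).trans_eq (by push_cast; ring)
  · refine mul_le_mul_left ((monotoneTupleSum_Ico_le σ hσ _).trans (mul_le_mul_left ?_ _)) _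
    have := (mem_Icc.1 hL).1
    gcongr
    exact_mod_cast (by omega : s - L + 1 ≤ s)
  · subst hU
    simp only [Lo, Nat.mul_zero, Nat.zero_add, monotoneTupleSum_Ico_one_two]
    simp
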